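/- Fix integers 1 ≤ n < p, a real κ ≥ 1, and reals λ̂₁ ≥ ⋯ ≥ λ̂_n > 0 with λ̂_{n+1} = ⋯ = λ̂_p = 0. Let μ* be the unique global minimizer of f over (0, ∞). If there exist integers α, β with 1 ≤ α < β ≤ n+1 such that λ̂_α ≥ κμ* > λ̂_{α+1} and λ̂_{β−1} ≥ μ* > λ̂_β (with the convention λ̂_{n+1} = 0), then μ* = (κ·Σ_{i=1}^{α} λ̂ᵢ + Σ_{i=β}^{n} λ̂ᵢ) / (α·κ² + p − β + 1). -/

import Mathlib

/-- `gfun κ λ̂ μ = (min (max μ λ̂) (κμ) − λ̂)²`. -/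
noncomputable def gfun (κ lamh μ : ℝ) : ℝ := (min (max μ lamh) (κ * μ) - lamh) ^ 2

/-- `ffun κ p λ̂ μ = ∑_{i=1}^p gfun κ λ̂ᵢ μ` (1-based indexing of `λ̂`). -/
noncomputable def ffun (κ : ℝ) (p : ℕ) (lamhat : ℕ → ℝ) (μ : ℝ) : ℝ :=
  ∑ i ∈ Finset.Icc 1 p, gfun κ (lamhat i) μ

/-! For `μ > 0` and `κ ≥ 1` each `g_λ̂` equals `(μ - λ̂)₊² + (λ̂ - κμ)₊²`, which is `C¹`, so `f` is
differentiable on `(0, ∞)` and its derivative vanishes at the interior minimizer `μ*`. The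
hypotheses on `α` and `β` say which branch every summand is on at `μ*`: the indices `i ≤ α`
contribute `2κ(κμ* - λ̂ᵢ)`, those with `α < i < β` contribute `0`, and those with `i ≥ β` contribute
`2(μ* - λ̂ᵢ)`, where `λ̂ᵢ = 0` for `i > n`. Setting the sum to zero is a linear equation in `μ*`. -/

open Set Filter

lemma hasDerivAt_max_zero_sq (x : ℝ) :
    HasDerivAt (fun t : ℝ => max t 0 ^ 2) (2 * max x 0) x := by
  have hsq (y : ℝ) : HasDerivAt (fun t : ℝ => t ^ 2) (2 * y) y := by
    simpa using hasDerivAt_pow 2 y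
  rcases lt_trichotomy x 0 with hx | rfl | hx
  · rw [max_eq_right hx.le, mul_zero]
    refine (hasDerivAt_const x (0 : ℝ)).congr_of_eventuallyEq ?_
    filter_upwards [Iio_mem_nhds hx] with t ht
    simp [max_eq_right (mem_Iio.mp ht).le]
  · have hleft : HasDerivWithinAt (fun t : ℝ => max t 0 ^ 2) 0 (Iic 0) 0 :=
      (hasDerivWithinAt_const 0 _ 0).congr (fun t ht => by simp [max_eq_right (mem_Iic.mp ht)])
        (by simp)
    have hright : HasDerivWithinAt (fun t : ℝ => max t 0 ^ 2) 0 (Ici 0) 0 := by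
      simpa using ((hsq 0).hasDerivWithinAt (s := Ici 0)).congr
        (fun t ht => by simp [max_eq_left (mem_Ici.mp ht)]) (by simp)
    simpa [Iic_union_Ici] using hleft.union hright
  · rw [max_eq_left hx.le]
    refine (hsq x).congr_of_eventuallyEq ?_
    filter_upwards [Ioi_mem_nhds hx] with t ht
    simp [max_eq_left (mem_Ioi.mp ht).le]

noncomputable def gfunDeriv (κ lamh μ : ℝ) : ℝ :=
  2 * max (μ - lamh) 0 - 2 * κ * max (lamh - κ * μ) 0

section Regimes

variable {κ lamh μ : ℝ}

lemma gfun_eq_of_le_mul (hμ : μ ≤ κ * μ) :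
    gfun κ lamh μ = max (μ - lamh) 0 ^ 2 + max (lamh - κ * μ) 0 ^ 2 := by
  unfold gfun
  rcases le_total lamh μ with h | h
  · rw [max_eq_left h, min_eq_left hμ, max_eq_left (by linarith), max_eq_right (by linarith)]
    ring
  rcases le_total lamh (κ * μ) with h' | h'
  · rw [max_eq_right h, min_eq_left h', max_eq_right (by linarith), max_eq_right (by linarith)]
    ring
  · rw [max_eq_right h, min_eq_right h', max_eq_right (by linarith), max_eq_left (by linarith)]
    ring

lemma gfunDeriv_of_mul_le (hμ : μ ≤ κ * μ) (hl : κ * μ ≤ lamh) :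
    gfunDeriv κ lamh μ = 2 * κ * (κ * μ - lamh) := by
  rw [gfunDeriv, max_eq_right (by linarith), max_eq_left (by linarith)]
  ring

lemma gfunDeriv_of_le_of_le (hl : μ ≤ lamh) (hl' : lamh ≤ κ * μ) : gfunDeriv κ lamh μ = 0 := by
  rw [gfunDeriv, max_eq_right (by linarith), max_eq_right (by linarith)]
  ring

lemma gfunDeriv_of_le (hμ : μ ≤ κ * μ) (hl : lamh ≤ μ) :
    gfunDeriv κ lamh μ = 2 * (μ - lamh) := by
  rw [gfunDeriv, max_eq_left (by linarith), max_eq_right (by linarith)]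
  ring

end Regimes

lemma hasDerivAt_gfun {κ : ℝ} (hκ : 1 ≤ κ) (lamh : ℝ) {μ : ℝ} (hμ : 0 < μ) :
    HasDerivAt (gfun κ lamh) (gfunDeriv κ lamh μ) μ := by
  have hup := (hasDerivAt_max_zero_sq (μ - lamh)).comp μ ((hasDerivAt_id μ).sub_const lamh)
  have hdown := (hasDerivAt_max_zero_sq (lamh - κ * μ)).comp μ
    (((hasDerivAt_id μ).const_mul κ).const_sub lamh)
  refine ((hup.add hdown).congr_of_eventuallyEq ?_).congr_deriv ?_
  · filter_upwards [Ioi_mem_nhds hμ] with ν hν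
    exact gfun_eq_of_le_mul (le_mul_of_one_le_left (le_of_lt hν) hκ)
  · simp only [gfunDeriv]
    ring

lemma hasDerivAt_ffun {κ : ℝ} (hκ : 1 ≤ κ) (p : ℕ) (lamhat : ℕ → ℝ) {μ : ℝ} (hμ : 0 < μ) :
    HasDerivAt (ffun κ p lamhat) (∑ i ∈ Finset.Icc 1 p, gfunDeriv κ (lamhat i) μ) μ := by
  unfold ffun
  exact HasDerivAt.fun_sum fun i _ => hasDerivAt_gfun hκ (lamhat i) hμ

lemma sum_gfunDeriv_eq_zero_of_isMinOn {κ : ℝ} (hκ : 1 ≤ κ) {p : ℕ} {lamhat : ℕ → ℝ} {μ : ℝ}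
    (hμ : 0 < μ) (hmin : IsMinOn (ffun κ p lamhat) (Ioi 0) μ) :
    ∑ i ∈ Finset.Icc 1 p, gfunDeriv κ (lamhat i) μ = 0 :=
  (hmin.isLocalMin (Ioi_mem_nhds hμ)).hasDerivAt_eq_zero (hasDerivAt_ffun hκ p lamhat hμ)

lemma sum_Ioc_eq_sum_Ioc_of_eq_zero {f : ℕ → ℝ} {m n p : ℕ} (hmn : m ≤ n) (hnp : n ≤ p)
    (hzero : ∀ i, n < i → i ≤ p → f i = 0) :
    ∑ i ∈ Finset.Ioc m p, f i = ∑ i ∈ Finset.Ioc m n, f i := by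
  rw [← Finset.sum_Ioc_consecutive f hmn hnp, add_eq_left]
  exact Finset.sum_eq_zero fun i hi => hzero i (Finset.mem_Ioc.mp hi).1 (Finset.mem_Ioc.mp hi).2

lemma sum_gfunDeriv_eq {n p : ℕ} (hnp : n < p) {κ : ℝ} {lamhat : ℕ → ℝ}
    (hanti : ∀ i j : ℕ, 1 ≤ i → i ≤ j → j ≤ p → lamhat j ≤ lamhat i)
    (hzero : ∀ i : ℕ, n < i → i ≤ p → lamhat i = 0)
    {μ : ℝ} (hμ : μ ≤ κ * μ) {α β : ℕ} (hαβ : α < β) (hβ : β ≤ n + 1)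
    (h1 : κ * μ ≤ lamhat α) (h2 : lamhat (α + 1) < κ * μ)
    (h3 : μ ≤ lamhat (β - 1)) (h4 : lamhat β < μ) :
    ∑ i ∈ Finset.Icc 1 p, gfunDeriv κ (lamhat i) μ =
      2 * (((α : ℝ) * κ ^ 2 + (p : ℝ) - (β : ℝ) + 1) * μ -
        (κ * ∑ i ∈ Finset.Icc 1 α, lamhat i + ∑ i ∈ Finset.Icc β n, lamhat i)) := by
  have htop : ∀ i ∈ Finset.Icc 1 α, gfunDeriv κ (lamhat i) μ = 2 * κ * (κ * μ - lamhat i) :=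
    fun i hi => gfunDeriv_of_mul_le hμ <|
      h1.trans (hanti i α (Finset.mem_Icc.mp hi).1 (Finset.mem_Icc.mp hi).2 (by omega))
  have hmid : ∀ i ∈ Finset.Ioc α (β - 1), gfunDeriv κ (lamhat i) μ = 0 := by
    intro i hi
    obtain ⟨hαi, hiβ⟩ := Finset.mem_Ioc.mp hi
    exact gfunDeriv_of_le_of_le (h3.trans (hanti i (β - 1) (by omega) hiβ (by omega)))
      ((hanti (α + 1) i (by omega) hαi (by omega)).trans h2.le)
  have hbot : ∀ i ∈ Finset.Ioc (β - 1) p, gfunDeriv κ (lamhat i) μ = 2 * (μ - lamhat i) := by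
    intro i hi
    obtain ⟨hβi, hip⟩ := Finset.mem_Ioc.mp hi
    exact gfunDeriv_of_le hμ ((hanti β i (by omega) (by omega) hip).trans h4.le)
  have htail : ∑ i ∈ Finset.Ioc (β - 1) p, lamhat i = ∑ i ∈ Finset.Icc β n, lamhat i := by
    rw [sum_Ioc_eq_sum_Ioc_of_eq_zero (by omega) hnp.le hzero, ← Finset.Icc_add_one_left_eq_Ioc,
      Nat.sub_add_cancel (by omega)]
  have hcard : ((p - (β - 1) : ℕ) : ℝ) = (p : ℝ) - (β : ℝ) + 1 := by
    rw [Nat.cast_sub (by omega), Nat.cast_sub (by omega)]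
    push_cast
    ring
  have hIcc (m : ℕ) : Finset.Icc 1 m = Finset.Ioc 0 m := Finset.Icc_add_one_left_eq_Ioc 0 m
  rw [hIcc p, ← Finset.sum_Ioc_consecutive _ (Nat.zero_le _) (by omega : β - 1 ≤ p),
    ← Finset.sum_Ioc_consecutive _ (Nat.zero_le _) (by omega : α ≤ β - 1), ← hIcc α,
    Finset.sum_congr rfl htop, Finset.sum_eq_zero hmid, Finset.sum_congr rfl hbot]
  simp only [← Finset.mul_sum, Finset.sum_sub_distrib, Finset.sum_const, Nat.card_Icc,
    Nat.card_Ioc, add_tsub_cancel_right, nsmul_eq_mul, htail, hcard]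
  ring

theorem stmt15_general (n p : ℕ) (hnp : n < p) (κ : ℝ) (hκ : 1 ≤ κ)
    (lamhat : ℕ → ℝ)
    -- λ̂₁ ≥ ⋯ ≥ λ̂_n > 0 and λ̂_{n+1} = ⋯ = λ̂_p = 0:
    (hanti : ∀ i j : ℕ, 1 ≤ i → i ≤ j → j ≤ p → lamhat j ≤ lamhat i)
    (hzero : ∀ i : ℕ, n < i → i ≤ p → lamhat i = 0)
    -- μ* is the unique global minimizer of f over (0, ∞):
    (μstar : ℝ) (hμstar : 0 < μstar)
    (hmin : ∀ μ : ℝ, 0 < μ → ffun κ p lamhat μstar ≤ ffun κ p lamhat μ)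
    (α β : ℕ) (hαβ : α < β) (hβ : β ≤ n + 1)
    -- λ̂_α ≥ κμ* > λ̂_{α+1} and λ̂_{β−1} ≥ μ* > λ̂_β:
    (h1 : κ * μstar ≤ lamhat α) (h2 : lamhat (α + 1) < κ * μstar)
    (h3 : μstar ≤ lamhat (β - 1)) (h4 : lamhat β < μstar) :
    μstar = (κ * ∑ i ∈ Finset.Icc 1 α, lamhat i + ∑ i ∈ Finset.Icc β n, lamhat i) /
      ((α : ℝ) * κ ^ 2 + (p : ℝ) - (β : ℝ) + 1) := by
  have hstationary := sum_gfunDeriv_eq_zero_of_isMinOn hκ hμstar fun μ hμ => hmin μ hμ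
  rw [sum_gfunDeriv_eq hnp hanti hzero (le_mul_of_one_le_left hμstar.le hκ) hαβ hβ h1 h2 h3 h4]
    at hstationary
  have hβp : (β : ℝ) ≤ p := by exact_mod_cast (by omega : β ≤ p)
  have hden : 0 < (α : ℝ) * κ ^ 2 + (p : ℝ) - (β : ℝ) + 1 := by
    have : 0 ≤ (α : ℝ) * κ ^ 2 := by positivity
    linarith
  rw [eq_div_iff hden.ne']
  linarith

theorem stmt15 (n p : ℕ) (hn : 1 ≤ n) (hnp : n < p) (κ : ℝ) (hκ : 1 ≤ κ)
    (lamhat : ℕ → ℝ)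
    -- λ̂₁ ≥ ⋯ ≥ λ̂_n > 0 and λ̂_{n+1} = ⋯ = λ̂_p = 0:
    (hanti : ∀ i j : ℕ, 1 ≤ i → i ≤ j → j ≤ p → lamhat j ≤ lamhat i)
    (hpos : ∀ i : ℕ, 1 ≤ i → i ≤ n → 0 < lamhat i)
    (hzero : ∀ i : ℕ, n < i → i ≤ p → lamhat i = 0)
    -- μ* is the unique global minimizer of f over (0, ∞):
    (μstar : ℝ) (hμstar : 0 < μstar)
    (hmin : ∀ μ : ℝ, 0 < μ → ffun κ p lamhat μstar ≤ ffun κ p lamhat μ)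
    (huniq : ∀ μ : ℝ, 0 < μ →
      (∀ ν : ℝ, 0 < ν → ffun κ p lamhat μ ≤ ffun κ p lamhat ν) → μ = μstar)
    (α β : ℕ) (hα : 1 ≤ α) (hαβ : α < β) (hβ : β ≤ n + 1)
    -- λ̂_α ≥ κμ* > λ̂_{α+1} and λ̂_{β−1} ≥ μ* > λ̂_β:
    (h1 : κ * μstar ≤ lamhat α) (h2 : lamhat (α + 1) < κ * μstar)
    (h3 : μstar ≤ lamhat (β - 1)) (h4 : lamhat β < μstar) :
    μstar = (κ * ∑ i ∈ Finset.Icc 1 α, lamhat i + ∑ i ∈ Finset.Icc β n, lamhat i) /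
      ((α : ℝ) * κ ^ 2 + (p : ℝ) - (β : ℝ) + 1) :=
  stmt15_general n p hnp κ hκ lamhat hanti hzero μstar hμstar hmin α β hαβ hβ h1 h2 h3 h4
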